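/- Let G = F(n_1) × ⋯ × F(n_N) with each n_i ≥ 2, let H = ⟨g_{1,1}⟩ × ⋯ × ⟨g_{N,1}⟩, and for each i let G_i = F(n_1) × ⋯ × ⟨g_{i,1}⟩ × ⋯ × F(n_N) (the i-th free factor replaced by the cyclic subgroup generated by g_{i,1}). Let S_1 ⊆ G be a finite set disjoint from (⋃_i G_i) ∪ H, and let N_0 − 1 be the maximal word length of elements of S_1. Let S be the set of elements w of G such that, for every i, w contains a nonzero power of some g_{i,j} with j ≥ 2, and w begins and ends (in its canonical decomposition) with powers of each g_{i,1} of exponent at least 2N_0 − 1 in absolute value. Then (S S_1) ∩ (S_1 S) = ∅. -/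

import Mathlib

/-! Everything happens in a single coordinate `i`, in the free group `F(n_i)` with `a = g_{i,1}`.
Suppose `x b = c y` with `x, y ∈ S` and `b, c ∈ S₁`. Strip `b = a^u b₀` and `c = c₀ a^t` of their
maximal `a`-powers; since `|u|, |t| ≤ N₀ - 1 < 2N₀ - 1`, the exponents next to the middle parts
stay nonzero, so both sides become concatenations of reduced words. The reduced word of `x b` then
begins with the whole block `a^m`, that of `c y` with `c₀`, which is nonempty because `c` is not a
power of `a`. Being shorter than `a^m`, `c₀` would consist of `a`'s only, yet its last letter is
not `a`. -/

open Pointwise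

def startsWithGen {n : ℕ} (j : Fin n) (w : FreeGroup (Fin n)) : Prop :=
  ∃ b : Bool, w.toWord.head? = some (j, b)

def endsWithGen {n : ℕ} (j : Fin n) (w : FreeGroup (Fin n)) : Prop :=
  ∃ b : Bool, w.toWord.getLast? = some (j, b)

/-- H = ⟨g_{1,1}⟩ × ⋯ × ⟨g_{N,1}⟩ inside G = F(n_1) × ⋯ × F(n_N). -/
def Hset (N : ℕ) (n : Fin N → ℕ) (hn : ∀ i, 2 ≤ n i) :
    Set (∀ i, FreeGroup (Fin (n i))) :=
  {w | ∀ i, ∃ m : ℤ,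
    w i = (FreeGroup.of (⟨0, by have := hn i; omega⟩ : Fin (n i))) ^ m}

/-- G_i: the i-th free factor replaced by ⟨g_{i,1}⟩. -/
def Giset (N : ℕ) (n : Fin N → ℕ) (hn : ∀ i, 2 ≤ n i) (i : Fin N) :
    Set (∀ j, FreeGroup (Fin (n j))) :=
  {w | ∃ m : ℤ,
    w i = (FreeGroup.of (⟨0, by have := hn i; omega⟩ : Fin (n i))) ^ m}

/-- total reduced word length of an element of the direct product. -/
def wordLen (N : ℕ) (n : Fin N → ℕ) (w : ∀ i, FreeGroup (Fin (n i))) : ℕ :=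
  ∑ i, (w i).toWord.length

/-- The set S: words which, for every i, contain a nonzero power of some
g_{i,j} with j ≥ 2 (i.e. have nontrivial middle part w_i in the canonical
decomposition) and begin and end with powers of each g_{i,1} of exponent at
least 2N₀ − 1 in absolute value. -/
def Sset (N : ℕ) (n : Fin N → ℕ) (hn : ∀ i, 2 ≤ n i) (N0 : ℕ) :
    Set (∀ i, FreeGroup (Fin (n i))) :=
  {w | ∀ i, ∃ (m k : ℤ) (wi : FreeGroup (Fin (n i))),
    w i = (FreeGroup.of (⟨0, by have := hn i; omega⟩ : Fin (n i))) ^ m * wi *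
          (FreeGroup.of (⟨0, by have := hn i; omega⟩ : Fin (n i))) ^ k ∧
    wi ≠ 1 ∧
    ¬ startsWithGen (⟨0, by have := hn i; omega⟩ : Fin (n i)) wi ∧
    ¬ endsWithGen (⟨0, by have := hn i; omega⟩ : Fin (n i)) wi ∧
    2 * (N0 : ℤ) - 1 ≤ |m| ∧ 2 * (N0 : ℤ) - 1 ≤ |k|}

namespace FreeGroup

variable {α : Type*} [DecidableEq α]

theorem toWord_of_zpow (a : α) (z : ℤ) :
    (of a ^ z).toWord = List.replicate z.natAbs (a, decide (0 ≤ z)) := by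
  obtain ⟨n, rfl | rfl⟩ := z.eq_nat_or_neg
  · simp
  · rcases n.eq_zero_or_pos with rfl | hn
    · simp
    · simp [invRev, hn.ne']

theorem fst_eq_of_mem_toWord_of_zpow {a : α} {z : ℤ} {p : α × Bool}
    (hp : p ∈ (of a ^ z).toWord) : p.1 = a := by
  rw [toWord_of_zpow] at hp
  rw [List.eq_of_mem_replicate hp]

theorem toWord_mul_of_fst_ne {x y : FreeGroup α}
    (h : ∀ p ∈ x.toWord.getLast?, ∀ q ∈ y.toWord.head?, p.1 ≠ q.1) :
    (x * y).toWord = x.toWord ++ y.toWord := by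
  rw [toWord_mul]
  refine IsReduced.reduce_eq (List.isChain_append.2 ⟨isReduced_toWord, isReduced_toWord, ?_⟩)
  exact fun p hp q hq hpq => absurd hpq (h p hp q hq)

theorem toWord_of_zpow_mul (a : α) (z : ℤ) {y : FreeGroup α}
    (hy : ∀ s, y.toWord.head? ≠ some (a, s)) :
    (of a ^ z * y).toWord = (of a ^ z).toWord ++ y.toWord := by
  refine toWord_mul_of_fst_ne fun p hp q hq hpq => hy q.2 ?_
  rw [fst_eq_of_mem_toWord_of_zpow (List.mem_of_mem_getLast? hp)] at hpq
  rw [hpq]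
  exact hq

theorem toWord_mul_of_zpow (a : α) (z : ℤ) {y : FreeGroup α}
    (hy : ∀ s, y.toWord.getLast? ≠ some (a, s)) :
    (y * of a ^ z).toWord = y.toWord ++ (of a ^ z).toWord := by
  refine toWord_mul_of_fst_ne fun p hp q hq hpq => hy p.2 ?_
  rw [← fst_eq_of_mem_toWord_of_zpow (List.mem_of_mem_head? hq), ← hpq]
  exact hp

theorem toWord_mul_of_zpow_mul {a : α} {z : ℤ} (hz : z ≠ 0) {x y : FreeGroup α}
    (hx : ∀ s, x.toWord.getLast? ≠ some (a, s)) (hy : ∀ s, y.toWord.head? ≠ some (a, s)) :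
    (x * (of a ^ z * y)).toWord = x.toWord ++ ((of a ^ z).toWord ++ y.toWord) := by
  rw [← toWord_of_zpow_mul a z hy]
  refine toWord_mul_of_fst_ne fun p hp q hq hpq => hx p.2 ?_
  have hne : (of a ^ z).toWord ≠ [] := by simpa [toWord_of_zpow] using hz
  rw [toWord_of_zpow_mul a z hy, List.head?_append_of_ne_nil _ hne] at hq
  rw [← fst_eq_of_mem_toWord_of_zpow (List.mem_of_mem_head? hq), ← hpq]
  exact hp

theorem exists_eq_of_zpow_mul (a : α) (x : FreeGroup α) :
    ∃ (u : ℤ) (y : FreeGroup α), x = of a ^ u * y ∧ (∀ s, y.toWord.head? ≠ some (a, s)) ∧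
      u.natAbs + y.toWord.length ≤ x.toWord.length := by
  suffices ∀ L : List (α × Bool), IsReduced L → ∃ (u : ℤ) (y : FreeGroup α), mk L = of a ^ u * y ∧
      (∀ s, y.toWord.head? ≠ some (a, s)) ∧ u.natAbs + y.toWord.length ≤ L.length by
    simpa only [mk_toWord] using this x.toWord isReduced_toWord
  intro L hL
  induction L with
  | nil => exact ⟨0, 1, by simp [← one_eq_mk], by simp, by simp⟩
  | cons p t ih =>
    by_cases hp : p.1 = a
    · obtain ⟨u, y, ht, hy, hlen⟩ := ih (hL.infix (List.suffix_cons p t).isInfix)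
      obtain ⟨ε, hε, hε1⟩ : ∃ ε : ℤ, mk [p] = of a ^ ε ∧ ε.natAbs = 1 := by
        obtain ⟨b, _ | _⟩ := p <;> subst hp
        · exact ⟨-1, by simp [of, inv_mk, invRev], rfl⟩
        · exact ⟨1, by simp [of], rfl⟩
      refine ⟨ε + u, y, ?_, hy, ?_⟩
      · rw [← List.singleton_append, ← mul_mk, ht, hε, zpow_add, mul_assoc]
      · have := Int.natAbs_add_le ε u
        simp only [List.length_cons]
        omega
    · refine ⟨0, mk (p :: t), by simp, fun s h => hp ?_, by simp [hL.reduce_eq]⟩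
      simp only [toWord_mk, hL.reduce_eq, List.head?_cons, Option.some.injEq] at h
      rw [h]

theorem exists_eq_mul_of_zpow (a : α) (x : FreeGroup α) :
    ∃ (u : ℤ) (y : FreeGroup α), x = y * of a ^ u ∧ (∀ s, y.toWord.getLast? ≠ some (a, s)) ∧
      u.natAbs + y.toWord.length ≤ x.toWord.length := by
  obtain ⟨u, y, hxy, hy, hlen⟩ := exists_eq_of_zpow_mul a x⁻¹
  refine ⟨-u, y⁻¹, ?_, fun s h => ?_, by simpa [invRev] using hlen⟩
  · rw [zpow_neg, ← mul_inv_rev, ← hxy, inv_inv]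
  · rw [toWord_inv, invRev, List.getLast?_reverse, List.head?_map] at h
    obtain ⟨q, hq, hqs⟩ := Option.map_eq_some_iff.1 h
    rw [Prod.mk.injEq] at hqs
    exact hy q.2 (by rw [hq, ← hqs.1])

theorem zpow_mul_mul_zpow_mul_ne_mul {a : α} {m k m' k' : ℤ} {w w' b c : FreeGroup α}
    (hw : w ≠ 1) (hw_head : ∀ s, w.toWord.head? ≠ some (a, s))
    (hw_last : ∀ s, w.toWord.getLast? ≠ some (a, s))
    (hw' : w' ≠ 1) (hw'_head : ∀ s, w'.toWord.head? ≠ some (a, s))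
    (hw'_last : ∀ s, w'.toWord.getLast? ≠ some (a, s))
    (hm : c.toWord.length < m.natAbs) (hk : b.toWord.length < k.natAbs)
    (hm' : c.toWord.length < m'.natAbs) (hc : ∀ t : ℤ, c ≠ of a ^ t) :
    of a ^ m * w * of a ^ k * b ≠ c * (of a ^ m' * w' * of a ^ k') := by
  obtain ⟨u, b₀, rfl, hb₀, hu⟩ := exists_eq_of_zpow_mul a b
  obtain ⟨t, c₀, rfl, hc₀, ht⟩ := exists_eq_mul_of_zpow a c
  have hc₀_ne : c₀.toWord ≠ [] := by
    rw [Ne, toWord_eq_nil_iff]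
    rintro rfl
    exact hc t (one_mul _)
  have hw_ne : w.toWord ≠ [] := mt toWord_eq_nil_iff.1 hw
  have hw'_ne : w'.toWord ≠ [] := mt toWord_eq_nil_iff.1 hw'
  have hl : of a ^ m * w * of a ^ k * (of a ^ u * b₀) =
      of a ^ m * (w * (of a ^ (k + u) * b₀)) := by group
  have hr : c₀ * of a ^ t * (of a ^ m' * w' * of a ^ k') =
      c₀ * (of a ^ (t + m') * (w' * of a ^ k')) := by group
  have hl_word : (of a ^ m * (w * (of a ^ (k + u) * b₀))).toWord =
      (of a ^ m).toWord ++ (w * (of a ^ (k + u) * b₀)).toWord := by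
    refine toWord_of_zpow_mul a m fun s => ?_
    rw [toWord_mul_of_zpow_mul (by omega) hw_last hb₀, List.head?_append_of_ne_nil _ hw_ne]
    exact hw_head s
  have hr_word : (c₀ * (of a ^ (t + m') * (w' * of a ^ k'))).toWord =
      c₀.toWord ++ ((of a ^ (t + m')).toWord ++ (w' * of a ^ k').toWord) := by
    refine toWord_mul_of_zpow_mul (by omega) hc₀ fun s => ?_
    rw [toWord_mul_of_zpow a k' hw'_last, List.head?_append_of_ne_nil _ hw'_ne]
    exact hw'_head s
  intro h
  rw [hl, hr] at h
  have hpre : c₀.toWord <+: (of a ^ m).toWord := by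
    refine List.prefix_of_prefix_length_le
      (l₃ := (c₀ * (of a ^ (t + m') * (w' * of a ^ k'))).toWord) ?_ ?_ ?_
    · rw [hr_word]
      exact List.prefix_append _ _
    · rw [← h, hl_word]
      exact List.prefix_append _ _
    · rw [toWord_of_zpow, List.length_replicate]
      omega
  obtain ⟨p, hp⟩ := Option.ne_none_iff_exists'.1 (mt List.getLast?_eq_none_iff.1 hc₀_ne)
  refine hc₀ p.2 ?_
  rw [← fst_eq_of_mem_toWord_of_zpow (hpre.subset (List.mem_of_mem_getLast? hp))]
  exact hp

end FreeGroup

theorem stmt_2_general (N : ℕ) (n : Fin N → ℕ) (hn : ∀ i, 2 ≤ n i) (N0 : ℕ) (hN0 : 1 ≤ N0)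
    (S1 : Set (∀ i, FreeGroup (Fin (n i))))
    (hdisj : ∀ s ∈ S1, s ∉ Hset N n hn ∧ ∀ i, s ∉ Giset N n hn i)
    (hlen : ∀ s ∈ S1, wordLen N n s ≤ N0 - 1) :
    (Sset N n hn N0 * S1) ∩ (S1 * Sset N n hn N0) = ∅ := by
  refine Set.eq_empty_iff_forall_notMem.2 ?_
  rintro _ ⟨⟨x, hx, b, hb, rfl⟩, c, hc, y, hy, hcy⟩
  obtain ⟨i, -⟩ := not_forall.1 (hdisj b hb).1
  obtain ⟨m, k, w, hxi, hw, hw_head, hw_last, hm, hk⟩ := hx i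
  obtain ⟨m', k', w', hyi, hw', hw'_head, hw'_last, hm', -⟩ := hy i
  have short : ∀ s ∈ S1, ∀ z : ℤ, 2 * (N0 : ℤ) - 1 ≤ |z| → (s i).toWord.length < z.natAbs := by
    intro s hs z hz
    have := (Finset.single_le_sum (f := fun j => (s j).toWord.length)
      (fun j _ => Nat.zero_le _) (Finset.mem_univ i)).trans (hlen s hs)
    rw [Int.abs_eq_natAbs] at hz
    omega
  have hcoord : x i * b i = c i * y i := (congrFun hcy i).symm
  rw [hxi, hyi] at hcoord
  exact FreeGroup.zpow_mul_mul_zpow_mul_ne_mul hw (not_exists.1 hw_head)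
    (not_exists.1 hw_last) hw' (not_exists.1 hw'_head) (not_exists.1 hw'_last)
    (short c hc m hm) (short b hb k hk) (short c hc m' hm')
    (fun t ht => (hdisj c hc).2 i ⟨t, ht⟩) hcoord

/-- with S₁ ⊆ G finite, disjoint from (⋃ᵢ Gᵢ) ∪ H, of maximal word
length N₀ − 1, and S as above, one has (S S₁) ∩ (S₁ S) = ∅. -/
theorem stmt_2 (N : ℕ) (n : Fin N → ℕ) (hn : ∀ i, 2 ≤ n i) (N0 : ℕ) (hN0 : 1 ≤ N0)
    (S1 : Set (∀ i, FreeGroup (Fin (n i)))) (hfin : S1.Finite)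
    (hdisj : ∀ s ∈ S1, s ∉ Hset N n hn ∧ ∀ i, s ∉ Giset N n hn i)
    (hlen : ∀ s ∈ S1, wordLen N n s ≤ N0 - 1) :
    (Sset N n hn N0 * S1) ∩ (S1 * Sset N n hn N0) = ∅ :=
  stmt_2_general N n hn N0 hN0 S1 hdisj hlen
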